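/- Let $A, B, C > 0$ with $a = -1$, and for $B' \geq B$ let $x_1(B') \in (-1, 0)$ denote the unique zero in $(-1,0)$ of $f_{B'}(x) = A/(x + 1) + B'/x - C/(1 - x)$. Then $x_1$ is a strictly decreasing function of $B'$, and the unique zero $x_2(B') \in (0,1)$ is a strictly increasing function of $B'$ when $A = C$. -/

import Mathlib

/-!
Raising `B` to `B + δ` adds `δ / x` to `f`, which is negative on `(-1, 0)` and positive on
`(0, 1)`. So at the old zero `x₁` the new function is negative, and at `x₂` it is positive.
Since `f` is strictly decreasing on each of the two intervals, the new zero in `(-1, 0)` lies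
to the left of `x₁` and the new zero in `(0, 1)` to the right of `x₂`.
-/

open Set

noncomputable def angelescoField (A B C x : ℝ) : ℝ := A / (x + 1) + B / x - C / (1 - x)

lemma angelescoField_add_middle (A B C δ x : ℝ) :
    angelescoField A (B + δ) C x = angelescoField A B C x + δ / x := by
  unfold angelescoField
  ring

section

variable {A B C : ℝ}

/-- The condition `0 < x * y` says that `x` and `y` lie on the same side of the pole at `0`. -/
lemma angelescoField_lt_of_lt (hA : 0 ≤ A) (hB : 0 < B) (hC : 0 ≤ C) {x y : ℝ}
    (hx : -1 < x) (hy : y < 1) (hxy : x < y) (hsgn : 0 < x * y) :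
    angelescoField A B C y < angelescoField A B C x := by
  have hA' : A / (y + 1) ≤ A / (x + 1) :=
    div_le_div_of_nonneg_left hA (by linarith) (by linarith)
  have hC' : C / (1 - x) ≤ C / (1 - y) :=
    div_le_div_of_nonneg_left hC (by linarith) (by linarith)
  have hB' : B / y < B / x := by
    have hdiff : B / x - B / y = B * (y - x) / (x * y) := by
      field_simp [(mul_ne_zero_iff.mp hsgn.ne').1, (mul_ne_zero_iff.mp hsgn.ne').2]
    have : 0 < B * (y - x) / (x * y) := div_pos (mul_pos hB (by linarith)) hsgn
    linarith
  unfold angelescoField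
  linarith

lemma strictAntiOn_angelescoField_Ioo_neg_one_zero (hA : 0 ≤ A) (hB : 0 < B) (hC : 0 ≤ C) :
    StrictAntiOn (angelescoField A B C) (Ioo (-1) 0) :=
  fun _ hx _ hy hxy =>
    angelescoField_lt_of_lt hA hB hC hx.1 (by linarith [hy.2]) hxy (mul_pos_of_neg_of_neg hx.2 hy.2)

lemma strictAntiOn_angelescoField_Ioo_zero_one (hA : 0 ≤ A) (hB : 0 < B) (hC : 0 ≤ C) :
    StrictAntiOn (angelescoField A B C) (Ioo 0 1) :=
  fun _ hx _ hy hxy =>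
    angelescoField_lt_of_lt hA hB hC (by linarith [hx.1]) hy.2 hxy (mul_pos hx.1 hy.1)

end

/-- For `a = -1`, the negative zero of `A/(x+1) + B'/x - C/(1-x)` is strictly
decreasing in `B'`, and when `A = C` the positive zero is strictly increasing in `B'`. -/
theorem jacobi_angelesco_base_monotone_beta
    (A B C δ : ℝ) (hA : 0 < A) (hB : 0 < B) (hC : 0 < C) (hδ : 0 < δ)
    (x₁ x₁' x₂ x₂' : ℝ)
    (hx₁ : x₁ ∈ Set.Ioo (-1 : ℝ) 0) (hfx₁ : A / (x₁ + 1) + B / x₁ - C / (1 - x₁) = 0)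
    (hx₁' : x₁' ∈ Set.Ioo (-1 : ℝ) 0)
    (hfx₁' : A / (x₁' + 1) + (B + δ) / x₁' - C / (1 - x₁') = 0)
    (hx₂ : x₂ ∈ Set.Ioo (0 : ℝ) 1) (hfx₂ : A / (x₂ + 1) + B / x₂ - C / (1 - x₂) = 0)
    (hx₂' : x₂' ∈ Set.Ioo (0 : ℝ) 1)
    (hfx₂' : A / (x₂' + 1) + (B + δ) / x₂' - C / (1 - x₂') = 0) :
    x₁' < x₁ ∧ (A = C → x₂ < x₂') := by
  have hBδ : 0 < B + δ := by linarith
  have hneg : angelescoField A (B + δ) C x₁ < angelescoField A (B + δ) C x₁' := by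
    rw [angelescoField_add_middle A B C δ x₁, show angelescoField A B C x₁ = 0 from hfx₁,
      show angelescoField A (B + δ) C x₁' = 0 from hfx₁', zero_add]
    exact div_neg_of_pos_of_neg hδ hx₁.2
  have hpos : angelescoField A (B + δ) C x₂' < angelescoField A (B + δ) C x₂ := by
    rw [angelescoField_add_middle A B C δ x₂, show angelescoField A B C x₂ = 0 from hfx₂,
      show angelescoField A (B + δ) C x₂' = 0 from hfx₂', zero_add]
    exact div_pos hδ hx₂.1
  exact ⟨(StrictAntiOn.lt_iff_gt (strictAntiOn_angelescoField_Ioo_neg_one_zero hA.le hBδ hC.le)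
      hx₁ hx₁').mp hneg,
    fun _ => (StrictAntiOn.lt_iff_gt (strictAntiOn_angelescoField_Ioo_zero_one hA.le hBδ hC.le)
      hx₂' hx₂).mp hpos⟩
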